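/- Let ℜ ⊆ F(𝒜) and let f ∈ S_1 be a linear form. Then the following are equivalent: (i) f ∈ K·ℜ; (ii) ι(f) ∈ J(ℜ) : x_[n]; (iii) ι(f) ∈ √(J(ℜ)) : x_[n]. -/

import Mathlib

open MvPolynomial

noncomputable section

variable {K : Type*} [Field K] {n : ℕ}

open Classical in
/-- The support `supp(a) = {i : aᵢ ≠ 0}` of the linear form `∑ᵢ aᵢ xᵢ ∈ S₁`,
where linear forms of `S = K[x₁,…,xₙ]` are identified with their coefficient
vectors `a : Fin n → K`. -/
def lsupp (a : Fin n → K) : Finset (Fin n) :=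
  Finset.univ.filter (fun i => a i ≠ 0)

/-- `ι(r) = ∑_{i ∈ supp r} aᵢ · x_{supp(r) ∖ {i}}` for the linear form `r = ∑ᵢ aᵢ xᵢ`. -/
def iotaL (a : Fin n → K) : MvPolynomial (Fin n) K :=
  ∑ i ∈ lsupp a, C (a i) * ∏ j ∈ (lsupp a).erase i, X j

/-- `x_[n] = x₁⋯xₙ`. -/
def xAll (n : ℕ) (K : Type*) [Field K] : MvPolynomial (Fin n) K := ∏ i, X i

/-- `a : Fin n → K` (identified with the linear form `∑ᵢ aᵢ xᵢ ∈ S₁`) is a relation of the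
central arrangement whose hyperplanes are the kernels of the linear forms `α i`, i.e. it lies
in the kernel of the map `S₁ → V*`, `xᵢ ↦ αᵢ`. -/
def IsRel {V : Type*} [AddCommGroup V] [Module K V]
    (α : Fin n → Module.Dual K V) (a : Fin n → K) : Prop :=
  ∑ i, a i • α i = 0

/-- `J(ℜ) = (ι(r) : r ∈ ℜ)`. -/
def Jid (R : Set (Fin n → K)) : Ideal (MvPolynomial (Fin n) K) :=
  Ideal.span (iotaL '' R)

/-- `I(ℜ) = (ι(r) : r ∈ K·ℜ)`. -/
def Iid (R : Set (Fin n → K)) : Ideal (MvPolynomial (Fin n) K) :=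
  Ideal.span (iotaL '' (Submodule.span K R : Set (Fin n → K)))

/-- The Orlik–Terao ideal `I(𝒜) = (ι(r) : r ∈ F(𝒜))`. -/
def OTid {V : Type*} [AddCommGroup V] [Module K V]
    (α : Fin n → Module.Dual K V) : Ideal (MvPolynomial (Fin n) K) :=
  Ideal.span (iotaL '' {a | IsRel α a})

/-- The codimension (height) of an ideal `I`: the infimum of the heights, in the prime
spectrum, of the prime ideals containing `I`. -/
def codim {R : Type*} [CommRing R] (I : Ideal R) : ℕ∞ :=
  ⨅ p ∈ {p : PrimeSpectrum R | I ≤ p.asIdeal}, Order.height p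

/-!
If `a` lies in `K·ℜ`, multiplying `ι(a)` by the variables outside `supp(a)` gives
`δ(a) = ∑ᵢ aᵢ x_{[n]∖{i}}`, which is linear in `a` and equals `ι(r) x_{[n]∖supp(r)}` on each
`r ∈ ℜ`; hence `δ(a) ∈ J(ℜ)`, and `ι(a) x_[n] = δ(a) x_{supp(a)} ∈ J(ℜ)`.

Conversely, embed `Kⁿ/K·ℜ` linearly into a field (the fraction field of a polynomial ring) and
let `L : Kⁿ → F` be the resulting map with kernel `K·ℜ`. No `eᵢ` is a relation, so every
`βᵢ = L(eᵢ)` is nonzero and `xᵢ ↦ βᵢ⁻¹` defines a ring map `S → F`. It sends `ι(v)` to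
`L(v) / ∏_{supp(v)} βⱼ`, so it kills `J(ℜ)`, hence `√J(ℜ)` (its kernel is prime), but not `x_[n]`.
Therefore `ι(a) x_[n] ∈ √J(ℜ)` forces `L(a) = 0`, i.e. `a ∈ K·ℜ`.
-/

open Classical in
lemma mem_lsupp {a : Fin n → K} {i : Fin n} : i ∈ lsupp a ↔ a i ≠ 0 := by
  simp [lsupp]

def deltaL : (Fin n → K) →ₗ[K] MvPolynomial (Fin n) K :=
  Fintype.linearCombination K fun i => ∏ j ∈ Finset.univ.erase i, X j

lemma deltaL_apply (a : Fin n → K) :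
    deltaL a = ∑ i, a i • ∏ j ∈ Finset.univ.erase i, (X j : MvPolynomial (Fin n) K) :=
  Fintype.linearCombination_apply _ _ _

lemma iotaL_mul_prod_compl_lsupp (a : Fin n → K) :
    iotaL a * ∏ j ∈ (lsupp a)ᶜ, X j = deltaL a := by
  have hunion : ∀ i ∈ lsupp a, (lsupp a).erase i ∪ (lsupp a)ᶜ = Finset.univ.erase i := by
    intro i hi
    rw [← Finset.union_compl (lsupp a), Finset.erase_union_distrib,
      Finset.erase_eq_of_notMem (Finset.notMem_compl.mpr hi)]
  rw [iotaL, deltaL_apply, Finset.sum_mul,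
    ← Finset.sum_subset (Finset.subset_univ (lsupp a)) fun i _ hi => by
      rw [not_not.mp (mem_lsupp.not.mp hi), zero_smul]]
  refine Finset.sum_congr rfl fun i hi => ?_
  rw [mul_assoc, ← Finset.prod_union (disjoint_compl_right.mono_left (Finset.erase_subset _ _)),
    hunion i hi, smul_eq_C_mul]

lemma iotaL_mul_xAll (a : Fin n → K) :
    iotaL a * xAll n K = deltaL a * ∏ j ∈ lsupp a, X j := by
  rw [xAll, ← Finset.prod_mul_prod_compl (lsupp a), ← iotaL_mul_prod_compl_lsupp]
  ring

lemma deltaL_mem_Jid {R : Set (Fin n → K)} {a : Fin n → K} (ha : a ∈ Submodule.span K R) :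
    deltaL a ∈ Jid R := by
  refine (Submodule.span_le (p := ((Jid R).restrictScalars K).comap deltaL)).mpr
    (fun r hr => ?_) ha
  rw [SetLike.mem_coe, Submodule.mem_comap, ← iotaL_mul_prod_compl_lsupp]
  exact Ideal.mul_mem_right _ _ (Ideal.subset_span ⟨r, hr, rfl⟩)

lemma iotaL_mul_xAll_mem_Jid {R : Set (Fin n → K)} {a : Fin n → K}
    (ha : a ∈ Submodule.span K R) : iotaL a * xAll n K ∈ Jid R := by
  rw [iotaL_mul_xAll]
  exact Ideal.mul_mem_right _ _ (deltaL_mem_Jid ha)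

section Evaluation

variable {F : Type*} [Field F] [Algebra K F] {β : Fin n → F}

lemma aeval_inv_deltaL_mul_prod (hβ : ∀ i, β i ≠ 0) (a : Fin n → K) :
    aeval (fun i => (β i)⁻¹) (deltaL a) * ∏ i, β i = ∑ i, a i • β i := by
  rw [deltaL_apply, map_sum, Finset.sum_mul]
  refine Finset.sum_congr rfl fun i _ => ?_
  have hprod : (∏ j ∈ Finset.univ.erase i, β j) ≠ 0 := Finset.prod_ne_zero_iff.mpr fun j _ => hβ j
  rw [map_smul, map_prod, smul_mul_assoc, ← Finset.mul_prod_erase _ _ (Finset.mem_univ i)]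
  simp only [aeval_X, Finset.prod_inv_distrib]
  field_simp

lemma aeval_inv_iotaL_mul_prod_lsupp (hβ : ∀ i, β i ≠ 0) (a : Fin n → K) :
    aeval (fun i => (β i)⁻¹) (iotaL a) * ∏ j ∈ lsupp a, β j = ∑ i, a i • β i := by
  have hcompl : (∏ j ∈ (lsupp a)ᶜ, β j) ≠ 0 := Finset.prod_ne_zero_iff.mpr fun j _ => hβ j
  rw [← aeval_inv_deltaL_mul_prod hβ, ← iotaL_mul_prod_compl_lsupp, map_mul, map_prod,
    ← Finset.prod_mul_prod_compl (lsupp a)]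
  simp only [aeval_X, Finset.prod_inv_distrib]
  field_simp

end Evaluation

universe u v in
theorem Submodule.exists_linearMap_field_ker_eq {K : Type u} {M : Type v} [Field K]
    [AddCommGroup M] [Module K M] (W : Submodule K M) :
    ∃ (F : Type (max u v)) (_ : Field F) (_ : Algebra K F) (L : M →ₗ[K] F),
      LinearMap.ker L = W := by
  let b := Module.Free.chooseBasis K (M ⧸ W)
  let A := MvPolynomial (Module.Free.ChooseBasisIndex K (M ⧸ W)) K
  refine ⟨FractionRing A, inferInstance, inferInstance,
    (IsScalarTower.toAlgHom K A (FractionRing A)).toLinearMap ∘ₗ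
      Finsupp.linearCombination K X ∘ₗ b.repr.toLinearMap ∘ₗ W.mkQ, ?_⟩
  rw [LinearMap.ker_comp_of_ker_eq_bot _
      (LinearMap.ker_eq_bot.mpr (IsFractionRing.injective A (FractionRing A))),
    LinearMap.ker_comp_of_ker_eq_bot _ (LinearMap.ker_eq_bot.mpr
      (linearIndependent_X _ _).finsuppLinearCombination_injective),
    LinearMap.ker_comp_of_ker_eq_bot _ b.repr.ker, ker_mkQ]

lemma map_eq_zero_of_iotaL_mul_xAll_mem_radical {F : Type*} [Field F] [Algebra K F]
    (L : (Fin n → K) →ₗ[K] F) (hL : ∀ i, L (Pi.single i 1) ≠ 0) {R : Set (Fin n → K)}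
    (hR : ∀ r ∈ R, L r = 0) {a : Fin n → K} (h : iotaL a * xAll n K ∈ (Jid R).radical) :
    L a = 0 := by
  set β : Fin n → F := fun i => L (Pi.single i 1)
  have hL_sum : ∀ v, ∑ i, v i • β i = L v := fun v => by
    conv_rhs => rw [← (Pi.basisFun K (Fin n)).sum_repr v]
    simp [β]
  have hiota : ∀ v, aeval (fun i => (β i)⁻¹) (iotaL v) * ∏ j ∈ lsupp v, β j = L v := fun v =>
    (aeval_inv_iotaL_mul_prod_lsupp hL v).trans (hL_sum v)
  have hprod : ∀ s : Finset (Fin n), ∏ j ∈ s, β j ≠ 0 := fun s =>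
    Finset.prod_ne_zero_iff.mpr fun j _ => hL j
  set φ := aeval (R := K) fun i => (β i)⁻¹
  have hJ : Jid R ≤ RingHom.ker φ := Ideal.span_le.mpr <| by
    rintro _ ⟨r, hr, rfl⟩
    have := hiota r
    rw [hR r hr] at this
    exact (mul_eq_zero.mp this).resolve_right (hprod _)
  have hxAll : φ (xAll n K) ≠ 0 := by
    simpa [φ, xAll, map_prod] using hprod Finset.univ
  have hφ : φ (iotaL a) * φ (xAll n K) = 0 := by
    rw [← map_mul]
    exact ((RingHom.ker_isPrime φ.toRingHom).radical_le_iff.mpr hJ) h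
  rw [← hiota a, (mul_eq_zero.mp hφ).resolve_right hxAll, zero_mul]

lemma mem_span_of_iotaL_mul_xAll_mem_radical {R : Set (Fin n → K)}
    (hsingle : ∀ i, Pi.single i 1 ∉ Submodule.span K R) {a : Fin n → K}
    (h : iotaL a * xAll n K ∈ (Jid R).radical) : a ∈ Submodule.span K R := by
  obtain ⟨F, _, _, L, hker⟩ := (Submodule.span K R).exists_linearMap_field_ker_eq
  simp only [← hker, LinearMap.mem_ker] at hsingle ⊢
  refine map_eq_zero_of_iotaL_mul_xAll_mem_radical L hsingle (fun r hr => ?_) h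
  rw [← LinearMap.mem_ker, hker]
  exact Submodule.subset_span hr

lemma single_notMem_span_of_isRel {V : Type*} [AddCommGroup V] [Module K V]
    {α : Fin n → Module.Dual K V} (hne : ∀ i, α i ≠ 0) {R : Set (Fin n → K)}
    (hR : ∀ r ∈ R, IsRel α r) (i : Fin n) : Pi.single i 1 ∉ Submodule.span K R := by
  have hspan : Submodule.span K R ≤ LinearMap.ker (Fintype.linearCombination K α) :=
    Submodule.span_le.mpr fun r hr => by
      rw [SetLike.mem_coe, LinearMap.mem_ker, Fintype.linearCombination_apply]
      exact hR r hr
  intro hi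
  apply hne i
  simpa [Fintype.linearCombination_apply_single] using hspan hi

theorem linear_form_mem_span_iff_iota_mem_colon_general
    {V : Type*} [AddCommGroup V] [Module K V]
    (α : Fin n → Module.Dual K V) (hne : ∀ i, α i ≠ 0)
    (R : Set (Fin n → K)) (hR : ∀ r ∈ R, IsRel α r) (a : Fin n → K) :
    (a ∈ Submodule.span K R ↔ iotaL a ∈ (Jid R).colon (Ideal.span {xAll n K})) ∧
    (a ∈ Submodule.span K R ↔
      iotaL a ∈ ((Jid R).radical).colon (Ideal.span {xAll n K})) := by
  have of_radical : iotaL a * xAll n K ∈ (Jid R).radical → a ∈ Submodule.span K R :=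
    mem_span_of_iotaL_mul_xAll_mem_radical (single_notMem_span_of_isRel hne hR)
  simp only [Ideal.mem_colon_span_singleton]
  exact ⟨⟨iotaL_mul_xAll_mem_Jid, fun h => of_radical (Ideal.le_radical h)⟩,
    ⟨fun h => Ideal.le_radical (iotaL_mul_xAll_mem_Jid h), of_radical⟩⟩

/-- Lemma 3.2, second part: for `ℜ ⊆ F(𝒜)` and a linear form `f = ∑ᵢ aᵢ xᵢ ∈ S₁`, the
following are equivalent: (i) `f ∈ K·ℜ`; (ii) `ι(f) ∈ J(ℜ) : x_[n]`;
(iii) `ι(f) ∈ √(J(ℜ)) : x_[n]`. -/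
theorem linear_form_mem_span_iff_iota_mem_colon
    {V : Type*} [AddCommGroup V] [Module K V] [FiniteDimensional K V]
    (α : Fin n → Module.Dual K V) (hne : ∀ i, α i ≠ 0)
    (hdist : ∀ i j, i ≠ j → LinearMap.ker (α i) ≠ LinearMap.ker (α j))
    (R : Set (Fin n → K)) (hR : ∀ r ∈ R, IsRel α r) (a : Fin n → K) :
    (a ∈ Submodule.span K R ↔ iotaL a ∈ (Jid R).colon (Ideal.span {xAll n K})) ∧
    (a ∈ Submodule.span K R ↔
      iotaL a ∈ ((Jid R).radical).colon (Ideal.span {xAll n K})) :=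
  linear_form_mem_span_iff_iota_mem_colon_general α hne R hR a

end
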